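/- arXiv:2603.06553 — 8 statements merged into one kernel-verified Lean document; each statement's English description precedes it below -/
import Mathlib

section
/- If E is an Archimedean vector lattice with order completion E^δ, and u(E) denotes the set of elements x in E^δ such that x_n ↑ x for some sequence (x_n) in E, then u(E) − u(E) is a sublattice of E^δ. -/
/-- If E is an Archimedean vector lattice with order completion E^δ, and
u(E) denotes the set of x in E^δ with x_n ↑ x for some sequence (x_n) in E, then
u(E) − u(E) is a sublattice of E^δ. -/
theorem stmt0 {Eδ : Type*} [Lattice Eδ] [AddCommGroup Eδ] [Module ℝ Eδ]
    [CovariantClass Eδ Eδ (· + ·) (· ≤ ·)]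
    (hsmul : ∀ (c : ℝ) (x y : Eδ), 0 ≤ c → x ≤ y → c • x ≤ c • y)
    (harch : ∀ x y : Eδ, (∀ n : ℕ, n • x ≤ y) → x ≤ 0)
    (hcomp : ∀ S : Set Eδ, S.Nonempty → BddAbove S → ∃ b, IsLUB S b)
    (E : Set Eδ)
    (hadd : ∀ x ∈ E, ∀ y ∈ E, x + y ∈ E)
    (hsm : ∀ (c : ℝ), ∀ x ∈ E, c • x ∈ E)
    (hsupcl : ∀ x ∈ E, ∀ y ∈ E, x ⊔ y ∈ E)
    (hdense : ∀ x : Eδ, 0 < x → ∃ y ∈ E, 0 < y ∧ y ≤ x)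
    (hmaj : ∀ x : Eδ, ∃ y ∈ E, x ≤ y) :
    ∀ S : Set Eδ,
      S = {x : Eδ | ∃ a b : Eδ,
            (∃ u : ℕ → Eδ, (∀ n, u n ∈ E) ∧ Monotone u ∧ IsLUB (Set.range u) a) ∧
            (∃ v : ℕ → Eδ, (∀ n, v n ∈ E) ∧ Monotone v ∧ IsLUB (Set.range v) b) ∧
            x = a - b} →
      (∀ x ∈ S, ∀ y ∈ S, x + y ∈ S) ∧ (∀ (c : ℝ), ∀ x ∈ S, c • x ∈ S) ∧
      (∀ x ∈ S, ∀ y ∈ S, x ⊔ y ∈ S) ∧ (∀ x ∈ S, ∀ y ∈ S, x ⊓ y ∈ S) := by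
  intro S hS
  subst hS
  haveI : CovariantClass Eδ Eδ (Function.swap (· + ·)) (· ≤ ·) :=
    ⟨fun a b c h => by simpa [add_comm] using add_le_add_left h a⟩
  -- the predicate "belongs to u(E)"
  set U : Eδ → Prop := fun a =>
    ∃ u : ℕ → Eδ, (∀ n, u n ∈ E) ∧ Monotone u ∧ IsLUB (Set.range u) a with hUdef
  -- 0 ∈ E
  obtain ⟨y0, hy0, -⟩ := hmaj 0
  have h0E : (0 : Eδ) ∈ E := by simpa using hsm 0 y0 hy0
  -- u(E) is closed under addition
  have Uadd : ∀ a b : Eδ, U a → U b → U (a + b) := by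
    rintro a b ⟨u, hu, humono, hua⟩ ⟨v, hv, hvmono, hvb⟩
    refine ⟨fun n => u n + v n, fun n => hadd _ (hu n) _ (hv n),
      fun m n h => add_le_add (humono h) (hvmono h), ?_, ?_⟩
    · rintro _ ⟨n, rfl⟩
      exact add_le_add (hua.1 ⟨n, rfl⟩) (hvb.1 ⟨n, rfl⟩)
    · intro w hw
      have key : ∀ m, u m ≤ w - b := by
        intro m
        have hb : b ≤ w - u m := by
          apply hvb.2
          rintro _ ⟨n, rfl⟩
          have h1 : u m + v n ≤ u (max m n) + v (max m n) :=
            add_le_add (humono (le_max_left m n)) (hvmono (le_max_right m n))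
          have h2 : u (max m n) + v (max m n) ≤ w := hw ⟨max m n, rfl⟩
          have := h1.trans h2
          rwa [le_sub_iff_add_le, add_comm]
        rwa [le_sub_iff_add_le, add_comm, ← le_sub_iff_add_le]
      have ha : a ≤ w - b := hua.2 (by rintro _ ⟨m, rfl⟩; exact key m)
      rwa [le_sub_iff_add_le] at ha
  -- u(E) is closed under sup
  have Usup : ∀ a b : Eδ, U a → U b → U (a ⊔ b) := by
    rintro a b ⟨u, hu, humono, hua⟩ ⟨v, hv, hvmono, hvb⟩
    refine ⟨fun n => u n ⊔ v n, fun n => hsupcl _ (hu n) _ (hv n),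
      fun m n h => sup_le_sup (humono h) (hvmono h), ?_, ?_⟩
    · rintro _ ⟨n, rfl⟩
      exact sup_le_sup (hua.1 ⟨n, rfl⟩) (hvb.1 ⟨n, rfl⟩)
    · intro w hw
      have h1 : a ≤ w := hua.2 (by
        rintro _ ⟨n, rfl⟩
        exact le_trans le_sup_left (hw ⟨n, rfl⟩))
      have h2 : b ≤ w := hvb.2 (by
        rintro _ ⟨n, rfl⟩
        exact le_trans le_sup_right (hw ⟨n, rfl⟩))
      exact sup_le h1 h2
  -- u(E) is closed under nonnegative scalar multiplication
  have Usmul : ∀ (c : ℝ) (a : Eδ), 0 ≤ c → U a → U (c • a) := by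
    rintro c a hc ⟨u, hu, humono, hua⟩
    rcases eq_or_lt_of_le hc with rfl | hcpos
    · refine ⟨fun _ => 0, fun _ => h0E, monotone_const, ?_⟩
      simp only [Set.range_const, zero_smul]
      exact isLUB_singleton
    · refine ⟨fun n => c • u n, fun n => hsm c _ (hu n),
        fun m n h => hsmul c _ _ hc (humono h), ?_, ?_⟩
      · rintro _ ⟨n, rfl⟩
        exact hsmul c _ _ hc (hua.1 ⟨n, rfl⟩)
      · intro w hw
        have hinv : (0 : ℝ) ≤ c⁻¹ := inv_nonneg.2 hc
        have h1 : ∀ n, u n ≤ c⁻¹ • w := by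
          intro n
          have := hsmul c⁻¹ _ _ hinv (hw ⟨n, rfl⟩)
          rwa [smul_smul, inv_mul_cancel₀ hcpos.ne', one_smul] at this
        have h2 : a ≤ c⁻¹ • w := hua.2 (by rintro _ ⟨n, rfl⟩; exact h1 n)
        have h3 := hsmul c _ _ hc h2
        rwa [smul_smul, mul_inv_cancel₀ hcpos.ne', one_smul] at h3
  refine ⟨?_, ?_, ?_, ?_⟩
  · rintro x ⟨a, b, ha, hb, rfl⟩ y ⟨c, d, hc, hd, rfl⟩
    exact ⟨a + c, b + d, Uadd a c ha hc, Uadd b d hb hd, by abel⟩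
  · rintro c x ⟨a, b, ha, hb, rfl⟩
    rcases le_or_gt 0 c with hc | hc
    · exact ⟨c • a, c • b, Usmul c a hc ha, Usmul c b hc hb, by rw [smul_sub]⟩
    · refine ⟨(-c) • b, (-c) • a, Usmul (-c) b (by linarith) hb,
        Usmul (-c) a (by linarith) ha, ?_⟩
      rw [smul_sub, neg_smul, neg_smul]; abel
  · rintro x ⟨a, b, ha, hb, rfl⟩ y ⟨c, d, hc, hd, rfl⟩
    have key : (a + d) ⊔ (c + b) = (a - b) ⊔ (c - d) + (b + d) := by
      rw [sup_add]; congr 1 <;> abel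
    exact ⟨(a + d) ⊔ (c + b), b + d,
      Usup _ _ (Uadd a d ha hd) (Uadd c b hc hb), Uadd b d hb hd,
      by rw [key]; abel⟩
  · rintro x ⟨a, b, ha, hb, rfl⟩ y ⟨c, d, hc, hd, rfl⟩
    have key : (a + d) ⊔ (c + b) = (a - b) ⊔ (c - d) + (b + d) := by
      rw [sup_add]; congr 1 <;> abel
    refine ⟨a + c, (a + d) ⊔ (c + b),
      Uadd a c ha hc, Usup _ _ (Uadd a d ha hd) (Uadd c b hc hb), ?_⟩
    have h := inf_add_sup (a - b) (c - d)
    rw [key, eq_sub_iff_add_eq, ← add_assoc, h]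
    abel
end

section
/- For an Archimedean vector lattice E with order completion E^δ, u(E) − u(E) = (u(E) ∪ l(E)) − (u(E) ∪ l(E)), where u(E) and l(E) are the sets of σ-upper and σ-lower elements of E in E^δ. -/
/-!
Since `E = -E`, negating a decreasing sequence shows `-l(E) ⊆ u(E)`, and since suprema of
increasing sequences add, `u(E)` is closed under addition. For such a set `S`, every difference
of elements of `S ∪ -S` is already a difference of elements of `S`, e.g.
`a - b = (a + a + (-b)) - a` for `a ∈ S`, `-b ∈ S`.
-/

open Set
open scoped Pointwise

section SigmaElements

variable {α : Type*} [AddCommGroup α] [Preorder α] [AddLeftMono α]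

-- `u(E)`
def sigmaUpper (E : Set α) : Set α :=
  {x | ∃ u : ℕ → α, (∀ n, u n ∈ E) ∧ Monotone u ∧ IsLUB (range u) x}

-- `l(E)`
def sigmaLower (E : Set α) : Set α :=
  {x | ∃ u : ℕ → α, (∀ n, u n ∈ E) ∧ Antitone u ∧ IsGLB (range u) x}

theorem Monotone.isLUB_range_add {ι : Type*} [Preorder ι] [IsDirected ι (· ≤ ·)]
    {u v : ι → α} (hu : Monotone u) (hv : Monotone v) {a b : α}
    (ha : IsLUB (range u) a) (hb : IsLUB (range v) b) :
    IsLUB (range (u + v)) (a + b) := by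
  refine (isLUB_congr (subset_antisymm ?_ ?_)).1 (ha.add hb)
  · exact upperBounds_mono_set (range_subset_iff.2 fun i => add_mem_add ⟨i, rfl⟩ ⟨i, rfl⟩)
  · rintro z hz _ ⟨_, ⟨i, rfl⟩, _, ⟨j, rfl⟩, rfl⟩
    obtain ⟨k, hik, hjk⟩ := directed_of (· ≤ ·) i j
    exact (add_le_add (hu hik) (hv hjk)).trans (hz ⟨k, rfl⟩)

theorem add_mem_sigmaUpper {E : Set α} (hE : ∀ x ∈ E, ∀ y ∈ E, x + y ∈ E) {x y : α}
    (hx : x ∈ sigmaUpper E) (hy : y ∈ sigmaUpper E) : x + y ∈ sigmaUpper E := by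
  obtain ⟨u, huE, hu, hux⟩ := hx
  obtain ⟨v, hvE, hv, hvy⟩ := hy
  exact ⟨u + v, fun n => hE _ (huE n) _ (hvE n), hu.add hv, hu.isLUB_range_add hv hux hvy⟩

theorem neg_mem_sigmaUpper_of_mem_sigmaLower {E : Set α} (hE : ∀ x ∈ E, -x ∈ E) {x : α}
    (hx : x ∈ sigmaLower E) : -x ∈ sigmaUpper E := by
  obtain ⟨u, huE, hu, hux⟩ := hx
  refine ⟨fun n => -u n, fun n => hE _ (huE n), hu.neg, ?_⟩
  rw [← neg_range]
  exact hux.neg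

end SigmaElements

theorem union_sub_union_eq_sub_of_neg_mem {G : Type*} [AddCommGroup G] {S T : Set G}
    (hS : ∀ a ∈ S, ∀ b ∈ S, a + b ∈ S) (hT : ∀ x ∈ T, -x ∈ S) :
    (S ∪ T) - (S ∪ T) = S - S := by
  refine subset_antisymm ?_ (sub_subset_sub subset_union_left subset_union_left)
  intro x hx
  obtain ⟨a, ha | ha, b, hb | hb, rfl⟩ := mem_sub.1 hx
  · exact sub_mem_sub ha hb
  · exact mem_sub.2 ⟨a + a + -b, hS _ (hS a ha a ha) _ (hT b hb), a, ha, by abel⟩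
  · exact mem_sub.2 ⟨b, hb, b + b + -a, hS _ (hS b hb b hb) _ (hT a ha), by abel⟩
  · exact mem_sub.2 ⟨-b, hT b hb, -a, hT a ha, by abel⟩

theorem stmt1_general {Eδ : Type*} [Lattice Eδ] [AddCommGroup Eδ] [Module ℝ Eδ]
    [CovariantClass Eδ Eδ (· + ·) (· ≤ ·)]
    (E : Set Eδ)
    (hadd : ∀ x ∈ E, ∀ y ∈ E, x + y ∈ E)
    (hsm : ∀ (c : ℝ), ∀ x ∈ E, c • x ∈ E)
    (uE lE : Set Eδ)
    (huE : uE = {x : Eδ | ∃ u : ℕ → Eδ, (∀ n, u n ∈ E) ∧ Monotone u ∧ IsLUB (Set.range u) x})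
    (hlE : lE = {x : Eδ | ∃ u : ℕ → Eδ, (∀ n, u n ∈ E) ∧ Antitone u ∧ IsGLB (Set.range u) x}) :
    {x : Eδ | ∃ a ∈ uE, ∃ b ∈ uE, x = a - b} =
      {x : Eδ | ∃ a ∈ uE ∪ lE, ∃ b ∈ uE ∪ lE, x = a - b} := by
  have hneg : ∀ x ∈ E, -x ∈ E := fun x hx => by simpa using hsm (-1) x hx
  have hsub : (uE ∪ lE) - (uE ∪ lE) = uE - uE := by
    subst huE hlE
    exact union_sub_union_eq_sub_of_neg_mem (fun _ ha _ hb => add_mem_sigmaUpper hadd ha hb)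
      (fun _ hx => neg_mem_sigmaUpper_of_mem_sigmaLower hneg hx)
  ext x
  simpa only [mem_ofPred_eq, mem_sub, eq_comm (b := x)] using (Set.ext_iff.1 hsub x).symm

/-- For an Archimedean vector lattice E with order completion E^δ,
u(E) − u(E) = (u(E) ∪ l(E)) − (u(E) ∪ l(E)). -/
theorem stmt1 {Eδ : Type*} [Lattice Eδ] [AddCommGroup Eδ] [Module ℝ Eδ]
    [CovariantClass Eδ Eδ (· + ·) (· ≤ ·)]
    (hsmul : ∀ (c : ℝ) (x y : Eδ), 0 ≤ c → x ≤ y → c • x ≤ c • y)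
    (harch : ∀ x y : Eδ, (∀ n : ℕ, n • x ≤ y) → x ≤ 0)
    (hcomp : ∀ S : Set Eδ, S.Nonempty → BddAbove S → ∃ b, IsLUB S b)
    (E : Set Eδ)
    (hadd : ∀ x ∈ E, ∀ y ∈ E, x + y ∈ E)
    (hsm : ∀ (c : ℝ), ∀ x ∈ E, c • x ∈ E)
    (hsupcl : ∀ x ∈ E, ∀ y ∈ E, x ⊔ y ∈ E)
    (hdense : ∀ x : Eδ, 0 < x → ∃ y ∈ E, 0 < y ∧ y ≤ x)
    (hmaj : ∀ x : Eδ, ∃ y ∈ E, x ≤ y)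
    (uE lE : Set Eδ)
    (huE : uE = {x : Eδ | ∃ u : ℕ → Eδ, (∀ n, u n ∈ E) ∧ Monotone u ∧ IsLUB (Set.range u) x})
    (hlE : lE = {x : Eδ | ∃ u : ℕ → Eδ, (∀ n, u n ∈ E) ∧ Antitone u ∧ IsGLB (Set.range u) x}) :
    {x : Eδ | ∃ a ∈ uE, ∃ b ∈ uE, x = a - b} =
      {x : Eδ | ∃ a ∈ uE ∪ lE, ∃ b ∈ uE ∪ lE, x = a - b} :=
  stmt1_general E hadd hsm uE lE huE hlE
end

section
/- If K is a perfect Baire space, then the map P_c : CD_ω(K) → C_b(K) sending each f to the unique bounded continuous g with [f ≠ g] at most countable is a well-defined linear lattice homomorphism, a projection onto C_b(K), and bounded with norm at most 1 for the sup norm. -/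
/-- f is a bounded real function (member of B(K)). -/
def Bdd {K : Type*} (f : K → ℝ) : Prop := ∃ C : ℝ, ∀ x, |f x| ≤ C

/-- The space CD_ω(K). -/
def CDomega (K : Type*) [TopologicalSpace K] : Set (K → ℝ) :=
  {f | Bdd f ∧ ∃ g : K → ℝ, Continuous g ∧ Bdd g ∧ {x | f x ≠ g x}.Countable}

/-!
"Agreeing off a countable set" is equality along the cocountable filter, so it is compatible
with `+`, `•` and `⊔`. In a perfect T1 Baire space every cocountable set is dense (a countable
intersection of the dense open sets `{x}ᶜ`), so a closed cocountable set is everything. Hence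
continuous functions agreeing off a countable set are equal, which makes `P` well defined and
forces it to commute with the operations; the bound passes from `f` to `P f` because
`{y | |P f y| ≤ C}` is closed and cocountable.
-/

open Filter Set

theorem eventuallyEq_cocountable_iff {α β : Type*} {f g : α → β} :
    f =ᶠ[cocountable] g ↔ {x | f x ≠ g x}.Countable := by
  rw [EventuallyEq, Filter.Eventually, mem_cocountable, compl_ofPred]

section PerfectBaire

variable {K : Type*} [TopologicalSpace K] [T1Space K] [BaireSpace K]

theorem Dense.of_mem_cocountable (hperfect : ∀ x : K, ¬ IsOpen ({x} : Set K)) {s : Set K}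
    (hs : s ∈ cocountable) : Dense s := by
  have hdense : Dense (⋂ x ∈ sᶜ, ({x}ᶜ : Set K)) :=
    dense_biInter_of_isOpen (fun x _ => isOpen_compl_singleton) (mem_cocountable.1 hs)
      (fun x _ => dense_compl_singleton_iff_not_open.2 (hperfect x))
  refine hdense.mono fun y hy => ?_
  by_contra hys
  exact mem_iInter₂.1 hy y hys rfl

theorem IsClosed.eq_univ_of_mem_cocountable (hperfect : ∀ x : K, ¬ IsOpen ({x} : Set K))
    {s : Set K} (hclosed : IsClosed s) (hs : s ∈ cocountable) : s = univ := by
  rw [← hclosed.closure_eq]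
  exact (Dense.of_mem_cocountable hperfect hs).closure_eq

theorem Continuous.ext_of_eventuallyEq_cocountable
    (hperfect : ∀ x : K, ¬ IsOpen ({x} : Set K)) {Y : Type*} [TopologicalSpace Y] [T2Space Y]
    {g₁ g₂ : K → Y} (h₁ : Continuous g₁) (h₂ : Continuous g₂) (h : g₁ =ᶠ[cocountable] g₂) :
    g₁ = g₂ :=
  funext <| eq_univ_iff_forall.1 <|
    (isClosed_eq h₁ h₂).eq_univ_of_mem_cocountable hperfect h

end PerfectBaire

theorem Bdd.add {K : Type*} {f g : K → ℝ} (hf : Bdd f) (hg : Bdd g) : Bdd (f + g) := by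
  obtain ⟨C, hC⟩ := hf
  obtain ⟨D, hD⟩ := hg
  exact ⟨C + D, fun x => (abs_add_le _ _).trans (add_le_add (hC x) (hD x))⟩

theorem Bdd.const_smul {K : Type*} {f : K → ℝ} (c : ℝ) (hf : Bdd f) : Bdd (c • f) := by
  obtain ⟨C, hC⟩ := hf
  refine ⟨|c| * C, fun x => ?_⟩
  rw [Pi.smul_apply, smul_eq_mul, abs_mul]
  exact mul_le_mul_of_nonneg_left (hC x) (abs_nonneg c)

theorem Bdd.sup {K : Type*} {f g : K → ℝ} (hf : Bdd f) (hg : Bdd g) : Bdd (f ⊔ g) := by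
  obtain ⟨C, hC⟩ := hf
  obtain ⟨D, hD⟩ := hg
  exact ⟨max C D, fun x => (abs_max_le_max_abs_abs).trans (max_le_max (hC x) (hD x))⟩

section CDomega

variable {K : Type*} [TopologicalSpace K] {f g : K → ℝ}

theorem mem_CDomega_iff : f ∈ CDomega K ↔
    Bdd f ∧ ∃ g : K → ℝ, Continuous g ∧ Bdd g ∧ f =ᶠ[cocountable] g := by
  simp only [CDomega, mem_ofPred_eq, eventuallyEq_cocountable_iff]

theorem CDomega.add_mem (hf : f ∈ CDomega K) (hg : g ∈ CDomega K) : f + g ∈ CDomega K := by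
  obtain ⟨hfb, f', hf'c, hf'b, hff'⟩ := mem_CDomega_iff.1 hf
  obtain ⟨hgb, g', hg'c, hg'b, hgg'⟩ := mem_CDomega_iff.1 hg
  exact mem_CDomega_iff.2 ⟨hfb.add hgb, f' + g', hf'c.add hg'c, hf'b.add hg'b, hff'.add hgg'⟩

theorem CDomega.smul_mem (c : ℝ) (hf : f ∈ CDomega K) : c • f ∈ CDomega K := by
  obtain ⟨hfb, f', hf'c, hf'b, hff'⟩ := mem_CDomega_iff.1 hf
  exact mem_CDomega_iff.2
    ⟨hfb.const_smul c, c • f', hf'c.const_smul c, hf'b.const_smul c, hff'.const_smul c⟩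

theorem CDomega.sup_mem (hf : f ∈ CDomega K) (hg : g ∈ CDomega K) : f ⊔ g ∈ CDomega K := by
  obtain ⟨hfb, f', hf'c, hf'b, hff'⟩ := mem_CDomega_iff.1 hf
  obtain ⟨hgb, g', hg'c, hg'b, hgg'⟩ := mem_CDomega_iff.1 hg
  exact mem_CDomega_iff.2 ⟨hfb.sup hgb, f' ⊔ g', hf'c.max hg'c, hf'b.sup hg'b, hff'.sup hgg'⟩

end CDomega

theorem CDomega.eq_of_eventuallyEq {K : Type*} [TopologicalSpace K] [T1Space K] [BaireSpace K]
    (hperfect : ∀ x : K, ¬ IsOpen ({x} : Set K)) {P : (K → ℝ) → (K → ℝ)}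
    (hP : ∀ f ∈ CDomega K, Continuous (P f) ∧ Bdd (P f) ∧ {x | f x ≠ P f x}.Countable)
    {f g : K → ℝ} (hf : f ∈ CDomega K) (hg : Continuous g)
    (hfg : f =ᶠ[cocountable] g) : P f = g :=
  Continuous.ext_of_eventuallyEq_cocountable hperfect (hP f hf).1 hg
    ((eventuallyEq_cocountable_iff.2 (hP f hf).2.2).symm.trans hfg)

/-- If K is a perfect Baire space, then the map P_c : CD_ω(K) → C_b(K)
sending each f to the unique bounded continuous g with [f ≠ g] at most countable is a
well-defined linear lattice homomorphism, a projection onto C_b(K), and bounded with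
norm at most 1 for the sup norm. -/
theorem stmt5 {K : Type*} [TopologicalSpace K] [T2Space K] [BaireSpace K]
    (hperfect : ∀ x : K, ¬ IsOpen ({x} : Set K)) :
    -- well-definedness: existence and uniqueness of the continuous representative
    (∀ f ∈ CDomega K, ∃! g : K → ℝ, Continuous g ∧ Bdd g ∧ {x | f x ≠ g x}.Countable) ∧
    -- and for any map P realizing this assignment:
    ∀ P : (K → ℝ) → (K → ℝ),
      (∀ f ∈ CDomega K, Continuous (P f) ∧ Bdd (P f) ∧ {x | f x ≠ P f x}.Countable) →
      -- linearity
      (∀ f ∈ CDomega K, ∀ g ∈ CDomega K, P (f + g) = P f + P g) ∧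
      (∀ (c : ℝ), ∀ f ∈ CDomega K, P (c • f) = c • P f) ∧
      -- lattice homomorphism
      (∀ f ∈ CDomega K, ∀ g ∈ CDomega K, P (f ⊔ g) = P f ⊔ P g) ∧
      -- projection onto C_b(K)
      (∀ f ∈ CDomega K, Continuous f → P f = f) ∧
      (∀ f ∈ CDomega K, P f ∈ CDomega K ∧ P (P f) = P f) ∧
      -- bounded with norm at most 1 for the sup norm
      (∀ f ∈ CDomega K, ∀ C : ℝ, (∀ x, |f x| ≤ C) → ∀ x, |P f x| ≤ C) := by
  refine ⟨fun f hf => ?_, fun P hP => ?_⟩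
  · obtain ⟨-, g, hg⟩ := hf
    refine ⟨g, hg, fun g' hg' => ?_⟩
    exact Continuous.ext_of_eventuallyEq_cocountable hperfect hg'.1 hg.1 <|
      (eventuallyEq_cocountable_iff.2 hg'.2.2).symm.trans (eventuallyEq_cocountable_iff.2 hg.2.2)
  have hPeq : ∀ f ∈ CDomega K, f =ᶠ[cocountable] P f :=
    fun f hf => eventuallyEq_cocountable_iff.2 (hP f hf).2.2
  have hPf_mem : ∀ f ∈ CDomega K, P f ∈ CDomega K :=
    fun f hf => mem_CDomega_iff.2 ⟨(hP f hf).2.1, P f, (hP f hf).1, (hP f hf).2.1, .rfl⟩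
  have hP_eq := @CDomega.eq_of_eventuallyEq _ _ _ _ hperfect _ hP
  refine ⟨fun f hf g hg => ?_, fun c f hf => ?_, fun f hf g hg => ?_,
    fun f hf hfc => hP_eq hf hfc .rfl,
    fun f hf => ⟨hPf_mem f hf, hP_eq (hPf_mem f hf) (hP f hf).1 .rfl⟩, fun f hf C hC => ?_⟩
  · exact hP_eq (CDomega.add_mem hf hg) ((hP f hf).1.add (hP g hg).1)
      ((hPeq f hf).add (hPeq g hg))
  · exact hP_eq (CDomega.smul_mem c hf) ((hP f hf).1.const_smul c) ((hPeq f hf).const_smul c)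
  · exact hP_eq (CDomega.sup_mem hf hg) ((hP f hf).1.max (hP g hg).1)
      ((hPeq f hf).sup (hPeq g hg))
  · have hbound : ∀ᶠ y in cocountable, |P f y| ≤ C :=
      (hPeq f hf).mono fun y hy => hy ▸ hC y
    exact eq_univ_iff_forall.1 <|
      (isClosed_le (hP f hf).1.abs continuous_const).eq_univ_of_mem_cocountable hperfect hbound
end

section
/- If K is a perfect Baire space, then CD_ω(K) is a closed sublattice of B(K) with respect to the uniform norm. -/
/-!
Pointwise operations `φ (f x) (g x)` with `φ` continuous preserve `CD_ω(K)`: if `f = f'` and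
`g = g'` off countable sets, then `φ ∘ (f, g) = φ ∘ (f', g')` off their union, and continuous
images of bounded sets of `ℝ × ℝ` are bounded.

For a uniform limit `f` of `uₙ ∈ CD_ω(K)` with continuous modifications `gₙ`, the union of the
countably many exceptional sets has dense complement `D`, because `K` is Baire and its points
are not open. On `D` the `gₙ` equal the `uₙ`, so they are uniformly Cauchy there; since
`|gₙ - gₘ| ≤ ε` is a closed condition, they are uniformly Cauchy on all of `K`. Their continuous
uniform limit agrees with `f` on `D`.
-/

open Set Filter Function

theorem Set.Countable.dense_compl_of_baire {K : Type*} [TopologicalSpace K] [T1Space K]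
    [BaireSpace K] (hperfect : ∀ x : K, ¬ IsOpen ({x} : Set K)) {S : Set K} (hS : S.Countable) :
    Dense Sᶜ := by
  rw [← biUnion_of_singleton S, compl_iUnion₂]
  exact dense_biInter_of_isOpen (fun x _ => isOpen_compl_singleton) hS
    fun x _ => dense_compl_singleton_iff_not_open.2 (hperfect x)

theorem UniformCauchySeqOn.univ_of_dense {ι X β : Type*} [TopologicalSpace X] [UniformSpace β]
    {F : ι → X → β} {p : Filter ι} {s : Set X} (hF : UniformCauchySeqOn F p s) (hs : Dense s)
    (hc : ∀ i, Continuous (F i)) : UniformCauchySeqOn F p univ := by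
  intro u hu
  obtain ⟨v, ⟨hv, hv_closed⟩, hvu⟩ := uniformity_hasBasis_closed.mem_iff.1 hu
  filter_upwards [hF v hv] with m hm x _
  exact hvu (hs.induction hm (hv_closed.preimage ((hc m.1).prodMk (hc m.2))) x)

theorem bdd_iff_isBounded_range {K : Type*} {f : K → ℝ} :
    Bdd f ↔ Bornology.IsBounded (range f) := by
  simp only [Bdd, isBounded_iff_forall_norm_le, forall_mem_range, Real.norm_eq_abs]

theorem Bdd.comp₂ {K : Type*} {φ : ℝ → ℝ → ℝ} (hφ : Continuous (uncurry φ)) {f g : K → ℝ}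
    (hf : Bdd f) (hg : Bdd g) : Bdd fun x => φ (f x) (g x) := by
  rw [bdd_iff_isBounded_range] at hf hg ⊢
  refine (((hf.prod hg).isCompact_closure.image hφ).isBounded).subset ?_
  rintro _ ⟨x, rfl⟩
  exact ⟨(f x, g x), subset_closure ⟨mem_range_self x, mem_range_self x⟩, rfl⟩

theorem comp₂_mem_CDomega {K : Type*} [TopologicalSpace K] {φ : ℝ → ℝ → ℝ}
    (hφ : Continuous (uncurry φ)) {f g : K → ℝ} (hf : f ∈ CDomega K) (hg : g ∈ CDomega K) :
    (fun x => φ (f x) (g x)) ∈ CDomega K := by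
  obtain ⟨hf_bdd, f', hf'_cont, hf'_bdd, hff'⟩ := hf
  obtain ⟨hg_bdd, g', hg'_cont, hg'_bdd, hgg'⟩ := hg
  refine ⟨hf_bdd.comp₂ hφ hg_bdd, fun x => φ (f' x) (g' x), hφ.comp (hf'_cont.prodMk hg'_cont),
    hf'_bdd.comp₂ hφ hg'_bdd, (hff'.union hgg').mono fun x hx => ?_⟩
  by_contra h
  simp only [mem_union, mem_ofPred_eq, not_or, not_not] at h
  exact hx (by simp only [h.1, h.2])

theorem mem_CDomega_of_tendstoUniformly {K : Type*} [TopologicalSpace K] [T1Space K]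
    [BaireSpace K] (hperfect : ∀ x : K, ¬ IsOpen ({x} : Set K)) {u : ℕ → K → ℝ} {f : K → ℝ}
    (hu : ∀ n, u n ∈ CDomega K) (hf : Bdd f) (hlim : TendstoUniformly u f atTop) :
    f ∈ CDomega K := by
  choose g hg_cont _ hug using fun n => (hu n).2
  set D := (⋃ n, {x | u n x ≠ g n x})ᶜ
  have hD : Dense D := (countable_iUnion hug).dense_compl_of_baire hperfect
  have hgf : TendstoUniformlyOn g f atTop D :=
    hlim.tendstoUniformlyOn.congr <| Eventually.of_forall fun n x hx =>
      not_not.1 fun h => hx (mem_iUnion.2 ⟨n, h⟩)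
  have hcauchy := hgf.uniformCauchySeqOn.univ_of_dense hD hg_cont
  choose G hG using fun x => cauchySeq_tendsto_of_complete (hcauchy.cauchySeq (mem_univ x))
  have hgG : TendstoUniformly g G atTop :=
    tendstoUniformlyOn_univ.1 (hcauchy.tendstoUniformlyOn_of_tendsto fun x _ => hG x)
  have hG_cont : Continuous G := hgG.continuous (Frequently.of_forall hg_cont)
  have hfG : EqOn f G D := fun x hx => tendsto_nhds_unique (hgf.tendsto_at hx) (hG x)
  obtain ⟨C, hC⟩ := hf
  refine ⟨⟨C, hC⟩, G, hG_cont, ⟨C, hD.induction (fun x hx => hfG hx ▸ hC x)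
    (isClosed_le hG_cont.abs continuous_const)⟩, (countable_iUnion hug).mono fun x hx => ?_⟩
  by_contra hxD
  exact hx (hfG hxD)

/-- If K is a perfect Baire space, then CD_ω(K) is a closed sublattice of
B(K) with respect to the uniform norm. -/
theorem stmt6 {K : Type*} [TopologicalSpace K] [T2Space K] [BaireSpace K]
    (hperfect : ∀ x : K, ¬ IsOpen ({x} : Set K)) :
    -- sublattice of B(K)
    (CDomega K ⊆ {f | Bdd f}) ∧
    (∀ f ∈ CDomega K, ∀ g ∈ CDomega K, f + g ∈ CDomega K) ∧
    (∀ (c : ℝ), ∀ f ∈ CDomega K, c • f ∈ CDomega K) ∧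
    (∀ f ∈ CDomega K, ∀ g ∈ CDomega K, f ⊔ g ∈ CDomega K) ∧
    -- closed under uniform limits in B(K)
    (∀ (u : ℕ → K → ℝ) (f : K → ℝ), (∀ n, u n ∈ CDomega K) → Bdd f →
      (∀ ε : ℝ, 0 < ε → ∃ N : ℕ, ∀ n ≥ N, ∀ x, |u n x - f x| ≤ ε) →
      f ∈ CDomega K) := by
  refine ⟨fun f hf => hf.1, fun f hf g hg => comp₂_mem_CDomega continuous_add hf hg,
    fun c f hf => comp₂_mem_CDomega (φ := fun a _ => c * a)
      (continuous_const.mul continuous_fst) hf hf,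
    fun f hf g hg => comp₂_mem_CDomega continuous_sup hf hg,
    fun u f hu hf hconv => mem_CDomega_of_tendstoUniformly hperfect hu hf ?_⟩
  refine Metric.tendstoUniformly_iff.2 fun ε hε => ?_
  obtain ⟨N, hN⟩ := hconv (ε / 2) (half_pos hε)
  filter_upwards [eventually_ge_atTop N] with n hn x
  rw [Real.dist_eq, abs_sub_comm]
  exact (hN n hn x).trans_lt (half_lt_self hε)
end

section
/- If K is a perfect Hausdorff space, then CD_ω(K) is an order dense and majorizing sublattice of B(K); in particular it contains all indicator functions of singletons and the constant function 1. -/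
lemma const_mem_CDomega {K : Type*} [TopologicalSpace K] (c : ℝ) :
    (fun _ : K => c) ∈ CDomega K := by
  refine ⟨⟨|c|, fun x => le_refl _⟩, fun _ => c, continuous_const,
    ⟨|c|, fun x => le_refl _⟩, ?_⟩
  simp

lemma indicator_mem_CDomega {K : Type*} [TopologicalSpace K] (x₀ : K) (c : ℝ) :
    ({x₀} : Set K).indicator (fun _ => c) ∈ CDomega K := by
  refine ⟨⟨|c|, fun x => ?_⟩, fun _ => 0, continuous_const, ⟨0, fun x => by simp⟩, ?_⟩
  · by_cases h : x ∈ ({x₀} : Set K) <;> simp [Set.indicator, h, abs_nonneg]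
  · apply Set.Countable.mono ?_ (Set.countable_singleton x₀)
    intro x hx
    by_contra hxx
    exact hx (Set.indicator_of_notMem hxx _)

/-- If K is a perfect Hausdorff space, then CD_ω(K) is an order dense and
majorizing sublattice of B(K); in particular it contains all indicator functions of
singletons and the constant function 1. -/
theorem stmt7 {K : Type*} [TopologicalSpace K] [T2Space K] [Nonempty K]
    (hperfect : ∀ x : K, ¬ IsOpen ({x} : Set K)) :
    -- majorizing
    (∀ f : K → ℝ, Bdd f → ∃ g ∈ CDomega K, f ≤ g) ∧
    -- order dense
    (∀ f : K → ℝ, Bdd f → 0 ≤ f → f ≠ 0 → ∃ g ∈ CDomega K, 0 ≤ g ∧ g ≠ 0 ∧ g ≤ f) ∧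
    -- indicator functions of singletons
    (∀ x₀ : K, ({x₀} : Set K).indicator (fun _ => (1 : ℝ)) ∈ CDomega K) ∧
    -- constant function 1
    ((fun _ : K => (1 : ℝ)) ∈ CDomega K) := by
  refine ⟨?_, ?_, fun x₀ => indicator_mem_CDomega x₀ 1, const_mem_CDomega 1⟩
  · rintro f ⟨C, hC⟩
    exact ⟨fun _ => C, const_mem_CDomega C, fun x => (le_abs_self _).trans (hC x)⟩
  · intro f _ hf hne
    have : ∃ x₀, f x₀ ≠ 0 := by
      by_contra h
      push_neg at h
      exact hne (funext h)
    obtain ⟨x₀, hx₀⟩ := this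
    have hpos : 0 < f x₀ := lt_of_le_of_ne (hf x₀) (Ne.symm hx₀)
    refine ⟨({x₀} : Set K).indicator (fun _ => f x₀), indicator_mem_CDomega x₀ (f x₀),
      fun x => ?_, ?_, fun x => ?_⟩
    · by_cases h : x ∈ ({x₀} : Set K) <;> simp [Set.indicator, h, hpos.le]
    · intro h
      have := congrFun h x₀
      simp [Set.indicator] at this
      exact hx₀ this
    · by_cases h : x ∈ ({x₀} : Set K)
      · simp only [Set.mem_singleton_iff] at h; subst h; simp [Set.indicator]
      · simpa [Set.indicator, h] using hf x
end

section
/- Let K be a metrizable space containing a sequence (F_n)_{n≥0} of nonempty closed sets with F_0 = K, F_n ⊊ F_{n−1}, and such that for every x ∈ F_n (n ≥ 1) and every open neighbourhood U of x, the set U ∩ (F_{n−1} \ F_n) is uncountable. Define f = Σ_{n≥1} ((−1)^n/n)·1_{F_{n−1}\F_n}. Then for every g ∈ DBSC(K), the set {x : f(x) ≠ g(x)} is uncountable. -/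
/-- g is a difference of bounded semicontinuous functions. -/
def DBSC {K : Type*} [TopologicalSpace K] (g : K → ℝ) : Prop :=
  ∃ h k : K → ℝ, Bdd h ∧ Bdd k ∧ LowerSemicontinuous h ∧ LowerSemicontinuous k ∧
    g = h - k

/-- Let K be a metrizable space containing a decreasing sequence
(F_n)_{n≥0} of nonempty closed sets with F_0 = K, F_{n+1} ⊊ F_n, such that for every
x ∈ F_{n+1} and every open neighbourhood U of x, the set U ∩ (F_n \ F_{n+1}) is
uncountable. Define f = Σ_{n≥1} ((−1)^n/n)·1_{F_{n−1}\F_n}. Then for every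
g ∈ DBSC(K), the set [f ≠ g] is uncountable. -/
theorem stmt12 {K : Type*} [TopologicalSpace K] [TopologicalSpace.MetrizableSpace K]
    (F : ℕ → Set K)
    (hF0 : F 0 = Set.univ)
    (hclosed : ∀ n, IsClosed (F n))
    (hne : ∀ n, (F n).Nonempty)
    (hstrict : ∀ n, F (n + 1) ⊂ F n)
    (hsplit : ∀ n, ∀ x ∈ F (n + 1), ∀ U : Set K, IsOpen U → x ∈ U →
      ¬ (U ∩ (F n \ F (n + 1))).Countable)
    (f : K → ℝ)
    (hf : f = fun x => ∑' n : ℕ,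
      ((-1 : ℝ) ^ (n + 1) / (n + 1)) * (F n \ F (n + 1)).indicator (fun _ => (1 : ℝ)) x) :
    ∀ g : K → ℝ, DBSC g → ¬ {x | f x ≠ g x}.Countable := by
  intro g hg hS
  obtain ⟨h, k, ⟨Ch, hCh⟩, ⟨Ck, hCk⟩, hlsc, klsc, rfl⟩ := hg
  set S := {x | f x ≠ (h - k) x} with hSdef
  -- monotonicity of F
  have hanti : Antitone F := antitone_nat_of_succ_le (fun n => (hstrict n).subset)
  -- value of f on the annuli
  have hfval : ∀ n : ℕ, ∀ x ∈ F n \ F (n+1), f x = (-1 : ℝ)^(n+1) / (n+1) := by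
    intro n x hx
    rw [hf]
    have hz : ∀ m : ℕ, m ≠ n →
        ((-1 : ℝ) ^ (m + 1) / (m + 1)) * (F m \ F (m + 1)).indicator (fun _ => (1:ℝ)) x = 0 := by
      intro m hm
      rcases lt_or_gt_of_ne hm with hlt | hgt
      · have hx1 : x ∈ F (m+1) := hanti (by omega : m + 1 ≤ n) hx.1
        rw [Set.indicator_of_notMem (fun hc => hc.2 hx1)]; ring
      · have hx2 : x ∉ F m := fun hc => hx.2 (hanti (by omega : n + 1 ≤ m) hc)
        rw [Set.indicator_of_notMem (fun hc => hx2 hc.1)]; ring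
    show (∑' m : ℕ, ((-1 : ℝ) ^ (m + 1) / (m + 1)) * (F m \ F (m + 1)).indicator (fun _ => (1:ℝ)) x) = _
    rw [tsum_eq_single n hz, Set.indicator_of_mem hx]
    ring
  -- the one-step extension lemma
  have step : ∀ ε : ℝ, 0 < ε → ∀ m : ℕ, ∀ z ∈ F (m+1),
      ∃ w, w ∈ F m \ F (m+1) ∧ w ∉ S ∧ h z - ε < h w ∧ k z - ε < k w := by
    intro ε hε m z hz
    have h1 := hlsc z (h z - ε) (by linarith)
    have h2 := klsc z (k z - ε) (by linarith)
    obtain ⟨U, hUsub, hUopen, hzU⟩ := mem_nhds_iff.mp (h1.and h2)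
    have huncount := hsplit m z hz U hUopen hzU
    have hne' : ((U ∩ (F m \ F (m+1))) \ S).Nonempty := by
      rw [Set.nonempty_iff_ne_empty]
      intro hemp
      exact huncount (hS.mono (Set.diff_eq_empty.mp hemp))
    obtain ⟨w, ⟨hwU, hwF⟩, hwS⟩ := hne'
    exact ⟨w, hwF, hwS, (hUsub hwU).1, (hUsub hwU).2⟩
  -- chain construction
  have chain : ∀ ε : ℝ, 0 < ε → ∀ n : ℕ, ∀ z ∈ F n, ∃ x : ℕ → K, x n = z ∧
      (∀ j < n, x j ∈ F j \ F (j+1) ∧ x j ∉ S) ∧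
      (∀ j < n, h (x (j+1)) - ε < h (x j) ∧ k (x (j+1)) - ε < k (x j)) := by
    intro ε hε n
    induction n with
    | zero =>
      intro z _
      exact ⟨fun _ => z, rfl, fun j hj => absurd hj (by omega), fun j hj => absurd hj (by omega)⟩
    | succ n ih =>
      intro z hz
      obtain ⟨w, hwF, hwS, hh, hk⟩ := step ε hε n z hz
      obtain ⟨x, hxn, hxF, hxi⟩ := ih w hwF.1
      refine ⟨Function.update x (n+1) z, Function.update_self _ _ _, ?_, ?_⟩
      · intro j hj
        rw [Function.update_of_ne (by omega)]
        rcases Nat.lt_succ_iff_lt_or_eq.mp hj with h' | h'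
        · exact hxF j h'
        · subst h'; rw [hxn]; exact ⟨hwF, hwS⟩
      · intro j hj
        rcases Nat.lt_succ_iff_lt_or_eq.mp hj with h' | h'
        · rw [Function.update_of_ne (by omega : (j:ℕ) + 1 ≠ n + 1),
              Function.update_of_ne (by omega : (j:ℕ) ≠ n + 1)]
          exact hxi j h'
        · subst h'
          rw [Function.update_self, Function.update_of_ne (by omega : j ≠ j + 1), hxn]
          exact ⟨hh, hk⟩
  -- bounds are nonnegative
  obtain ⟨p0, hp0⟩ := hne 0
  have hCh0 : 0 ≤ Ch := le_trans (abs_nonneg _) (hCh p0)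
  have hCk0 : 0 ≤ Ck := le_trans (abs_nonneg _) (hCk p0)
  -- choose N large
  obtain ⟨N, hNsum, hN1⟩ : ∃ N : ℕ, (2*Ch + 2*Ck + 2 < ∑ i ∈ Finset.range N, (1:ℝ)/(i+1)) ∧ 1 ≤ N := by
    have ht := Real.tendsto_sum_range_one_div_nat_succ_atTop
    exact ((ht.eventually_gt_atTop (2*Ch + 2*Ck + 2)).and (Filter.eventually_ge_atTop 1)).exists
  have hNpos : (0:ℝ) < N := by exact_mod_cast hN1
  set ε : ℝ := 1 / N with hεdef
  have hε : 0 < ε := by positivity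
  -- starting point
  obtain ⟨y, hy⟩ := hne (N+1)
  obtain ⟨z, hzF, hzS, _, _⟩ := step ε hε N y hy
  obtain ⟨x, hxn, hxF, hxi⟩ := chain ε hε N z hzF.1
  have hall : ∀ j ≤ N, x j ∈ F j \ F (j+1) ∧ x j ∉ S := by
    intro j hj
    rcases lt_or_eq_of_le hj with h' | h'
    · exact hxF j h'
    · subst h'; rw [hxn]; exact ⟨hzF, hzS⟩
  -- g values along the chain
  have hgv : ∀ j ≤ N, h (x j) - k (x j) = (-1 : ℝ)^(j+1) / (j+1) := by
    intro j hj
    obtain ⟨hF', hS'⟩ := hall j hj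
    have : f (x j) = (h - k) (x j) := not_not.mp hS'
    rw [← hfval j (x j) hF', this, Pi.sub_apply]
  -- per-step upper bound
  have hub : ∀ j < N, |(h (x j) - k (x j)) - (h (x (j+1)) - k (x (j+1)))|
      ≤ (h (x j) - h (x (j+1))) + (k (x j) - k (x (j+1))) + 2*ε := by
    intro j hj
    obtain ⟨hh', hk'⟩ := hxi j hj
    rw [abs_le]
    constructor <;> linarith
  -- per-step lower bound
  have hlb : ∀ j < N, (1:ℝ)/(j+1)
      ≤ |(h (x j) - k (x j)) - (h (x (j+1)) - k (x (j+1)))| := by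
    intro j hj
    rw [hgv j (le_of_lt hj), hgv (j+1) hj]
    have hc : ((-1:ℝ))^(j+1+1) = -((-1:ℝ))^(j+1) := by rw [pow_succ]; ring
    have hpos1 : (0:ℝ) < (j:ℝ) + 1 := by positivity
    have hpos2 : (0:ℝ) < (j:ℝ) + 1 + 1 := by positivity
    have hcast : ((j:ℕ)+1 : ℕ) = (j:ℕ) + 1 := rfl
    push_cast
    rw [hc]
    have heq : (-1:ℝ)^(j+1) / ((j:ℝ)+1) - (-(-1:ℝ)^(j+1)) / ((j:ℝ)+1+1)
        = (-1:ℝ)^(j+1) * (1/((j:ℝ)+1) + 1/((j:ℝ)+1+1)) := by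
      field_simp; ring
    rw [heq, abs_mul, abs_pow, abs_neg, abs_one, one_pow, one_mul,
        abs_of_nonneg (by positivity)]
    have : (0:ℝ) ≤ 1/((j:ℝ)+1+1) := by positivity
    linarith
  -- sum up
  have hsum_le : ∑ j ∈ Finset.range N, (1:ℝ)/(j+1)
      ≤ ∑ j ∈ Finset.range N,
        ((h (x j) - h (x (j+1))) + (k (x j) - k (x (j+1))) + 2*ε) := by
    apply Finset.sum_le_sum
    intro j hj
    have hj' := Finset.mem_range.mp hj
    exact le_trans (hlb j hj') (hub j hj')
  have hsum_eq : ∑ j ∈ Finset.range N,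
        ((h (x j) - h (x (j+1))) + (k (x j) - k (x (j+1))) + 2*ε)
      = (h (x 0) - h (x N)) + (k (x 0) - k (x N)) + N * (2*ε) := by
    rw [Finset.sum_add_distrib, Finset.sum_add_distrib,
        Finset.sum_range_sub' (fun i => h (x i)), Finset.sum_range_sub' (fun i => k (x i)),
        Finset.sum_const, Finset.card_range, nsmul_eq_mul]
  have hNε : (N : ℝ) * (2*ε) = 2 := by
    rw [hεdef]; field_simp
  have hfinal : ∑ j ∈ Finset.range N, (1:ℝ)/(j+1) ≤ 2*Ch + 2*Ck + 2 := by
    rw [hsum_eq, hNε] at hsum_le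
    have b1 := abs_le.mp (hCh (x 0))
    have b2 := abs_le.mp (hCh (x N))
    have b3 := abs_le.mp (hCk (x 0))
    have b4 := abs_le.mp (hCk (x N))
    linarith
  linarith
end

section
/- Let E be an Archimedean vector lattice that is super order dense in a σ-order complete vector lattice X, and let I be the ideal generated by E in X^δ. Then the set of σ-upper elements of E in I equals the set of σ-lower elements of E in I, i.e. l(E) = u(E). -/
section Aux

variable {α : Type*} [Lattice α] [AddCommGroup α] [CovariantClass α α (· + ·) (· ≤ ·)]

/-- Subtracting an increasing sequence with a supremum gives a decreasing sequence with
an infimum. -/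
lemma aux_glb_sub {e : ℕ → α} {w d : α} (h : IsLUB (Set.range e) d) :
    IsGLB (Set.range fun n => w - e n) (w - d) := by
  constructor
  · rintro z ⟨n, rfl⟩
    exact sub_le_sub_left (h.1 ⟨n, rfl⟩) w
  · intro b hb
    have : d ≤ w - b := by
      apply h.2
      rintro z ⟨n, rfl⟩
      have := hb ⟨n, rfl⟩
      exact le_sub_comm.mp this
    exact le_sub_comm.mp this
/-- Subtracting a decreasing sequence with an infimum gives an increasing sequence with
a supremum. -/
lemma aux_lub_sub {e : ℕ → α} {w d : α} (h : IsGLB (Set.range e) d) :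
    IsLUB (Set.range fun n => w - e n) (w - d) := by
  constructor
  · rintro z ⟨n, rfl⟩
    exact sub_le_sub_left (h.1 ⟨n, rfl⟩) w
  · intro b hb
    have : w - b ≤ d := by
      apply h.2
      rintro z ⟨n, rfl⟩
      have := hb ⟨n, rfl⟩
      exact sub_le_comm.mp this
    exact sub_le_comm.mp this

end Aux

/-- Let E be an Archimedean vector lattice that is super order dense in a
σ-order complete vector lattice X, and let I be the ideal generated by E in X^δ. Then
the σ-upper elements of E in I coincide with the σ-lower elements of E in I:
l(E) = u(E). -/
theorem stmt17 {Xδ : Type*} [Lattice Xδ] [AddCommGroup Xδ] [Module ℝ Xδ]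
    [CovariantClass Xδ Xδ (· + ·) (· ≤ ·)]
    -- Xδ is an order completion of X: Dedekind complete, X order dense and majorizing
    (hcomp : ∀ C : Set Xδ, C.Nonempty → BddAbove C → ∃ b, IsLUB C b)
    (X E : Set Xδ) (hEX : E ⊆ X)
    -- X is a sublattice of Xδ, order dense and majorizing
    (hXadd : ∀ x ∈ X, ∀ y ∈ X, x + y ∈ X)
    (hXsm : ∀ (c : ℝ), ∀ x ∈ X, c • x ∈ X)
    (hXsup : ∀ x ∈ X, ∀ y ∈ X, x ⊔ y ∈ X)
    (hXdense : ∀ x : Xδ, 0 < x → ∃ y ∈ X, 0 < y ∧ y ≤ x)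
    (hXmaj : ∀ x : Xδ, ∃ y ∈ X, x ≤ y)
    -- X is σ-order complete (suprema taken within X)
    (hXσ : ∀ C : Set Xδ, C ⊆ X → C.Countable → C.Nonempty →
      (∃ b ∈ X, ∀ c ∈ C, c ≤ b) →
      ∃ s ∈ X, (∀ c ∈ C, c ≤ s) ∧ ∀ b ∈ X, (∀ c ∈ C, c ≤ b) → s ≤ b)
    -- E is a sublattice of X
    (hEadd : ∀ x ∈ E, ∀ y ∈ E, x + y ∈ E)
    (hEsm : ∀ (c : ℝ), ∀ x ∈ E, c • x ∈ E)
    (hEsup : ∀ x ∈ E, ∀ y ∈ E, x ⊔ y ∈ E)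
    -- E is super order dense in X
    (hsuper : ∀ x ∈ X, 0 ≤ x → ∃ u : ℕ → Xδ, (∀ n, u n ∈ E ∧ 0 ≤ u n) ∧ Monotone u ∧
      IsLUB (Set.range u) x)
    -- I is the ideal generated by E in Xδ
    (I : Set Xδ) (hI : I = {y : Xδ | ∃ x ∈ E, |y| ≤ |x|}) :
    {y ∈ I | ∃ u : ℕ → Xδ, (∀ n, u n ∈ E) ∧ Monotone u ∧ IsLUB (Set.range u) y} =
      {y ∈ I | ∃ u : ℕ → Xδ, (∀ n, u n ∈ E) ∧ Antitone u ∧ IsGLB (Set.range u) y} := by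
  -- negation stays in E and X
  have hEneg : ∀ x ∈ E, -x ∈ E := by
    intro x hx
    have := hEsm (-1) x hx
    simpa [neg_smul, one_smul] using this
  have hXneg : ∀ x ∈ X, -x ∈ X := by
    intro x hx
    have := hXsm (-1) x hx
    simpa [neg_smul, one_smul] using this
  have hXsub : ∀ x ∈ X, ∀ y ∈ X, x - y ∈ X := by
    intro x hx y hy
    have := hXadd x hx (-y) (hXneg y hy)
    simpa [sub_eq_add_neg] using this
  have hEsub : ∀ x ∈ E, ∀ y ∈ E, x - y ∈ E := by
    intro x hx y hy
    have := hEadd x hx (-y) (hEneg y hy)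
    simpa [sub_eq_add_neg] using this
  -- a supremum in X of a subset of X is a supremum in Xδ (order density)
  have hdenseLUB : ∀ C : Set Xδ, C ⊆ X → ∀ s ∈ X, (∀ c ∈ C, c ≤ s) →
      (∀ b ∈ X, (∀ c ∈ C, c ≤ b) → s ≤ b) → IsLUB C s := by
    intro C hCX s hsX hub hleast
    refine ⟨fun c hc => hub c hc, fun b hb => ?_⟩
    by_contra hsb
    have h1 : 0 < s - s ⊓ b := by
      rcases lt_or_eq_of_le (sub_nonneg.mpr (inf_le_left (a := s) (b := b))) with h | h
      · exact h
      · exact absurd (le_trans (by rw [← sub_eq_zero.mp h.symm]) (inf_le_right (a := s) (b := b))) hsb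
    obtain ⟨e, heX, hepos, hele⟩ := hXdense _ h1
    have hse : s - e ∈ X := hXsub s hsX e heX
    have hub' : ∀ c ∈ C, c ≤ s - e := by
      intro c hc
      have h2 : c ≤ s ⊓ b := le_inf (hub c hc) (hb hc)
      have h3 : s ⊓ b ≤ s - e := le_sub_comm.mp hele
      exact h2.trans h3
    have h5 : s ≤ s - e := hleast _ hse hub'
    exact absurd ((le_sub_self_iff s).mp h5) hepos.not_ge
  -- main inclusion: u(E) ⊆ l(E)
  have key : ∀ y ∈ I, (∃ u : ℕ → Xδ, (∀ n, u n ∈ E) ∧ Monotone u ∧ IsLUB (Set.range u) y) →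
      ∃ u : ℕ → Xδ, (∀ n, u n ∈ E) ∧ Antitone u ∧ IsGLB (Set.range u) y := by
    intro y hyI ⟨u, huE, humono, hulub⟩
    obtain ⟨x, hxE, hyx⟩ := by rw [hI] at hyI; exact hyI
    -- w = |x| ∈ E dominates y
    set w : Xδ := x ⊔ (-x) with hw
    have hwE : w ∈ E := hEsup x hxE (-x) (hEneg x hxE)
    have habs : |x| = w := by simp [hw, abs]
    have hyw : y ≤ w := by
      calc y ≤ |y| := le_abs_self y
      _ ≤ |x| := hyx
      _ = w := habs
    -- y ∈ X : the supremum of u within X coincides with y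
    have hyX : y ∈ X := by
      obtain ⟨s, hsX, hub, hleast⟩ := hXσ (Set.range u)
        (by rintro z ⟨n, rfl⟩; exact hEX (huE n))
        (Set.countable_range u) (Set.range_nonempty u)
        ⟨w, hEX hwE, by rintro z ⟨n, rfl⟩; exact le_trans (hulub.1 ⟨n, rfl⟩) hyw⟩
      have : IsLUB (Set.range u) s := hdenseLUB _ (by rintro z ⟨n, rfl⟩; exact hEX (huE n))
        s hsX hub hleast
      rwa [hulub.unique this]
    -- apply super order density to w - y
    have hwyX : w - y ∈ X := hXsub w (hEX hwE) y hyX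
    obtain ⟨e, heE, hemono, helub⟩ := hsuper (w - y) hwyX (sub_nonneg.mpr hyw)
    refine ⟨fun n => w - e n, fun n => hEsub w hwE (e n) (heE n).1, ?_, ?_⟩
    · intro m n hmn
      exact sub_le_sub_left (hemono hmn) w
    · have := aux_glb_sub (w := w) helub
      simpa [sub_sub_cancel] using this
  -- negation swaps u(E) and l(E)
  have negI : ∀ y ∈ I, -y ∈ I := by
    intro y hy
    rw [hI] at hy ⊢
    obtain ⟨x, hxE, hle⟩ := hy
    exact ⟨x, hxE, by simpa [abs_neg] using hle⟩
  ext y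
  simp only [Set.mem_setOf_eq, Set.mem_sep_iff]
  constructor
  · rintro ⟨hyI, hu⟩
    exact ⟨hyI, key y hyI hu⟩
  · rintro ⟨hyI, v, hvE, hvanti, hvglb⟩
    refine ⟨hyI, ?_⟩
    -- -y ∈ u(E)
    have hnegu : ∃ u : ℕ → Xδ, (∀ n, u n ∈ E) ∧ Monotone u ∧ IsLUB (Set.range u) (-y) := by
      refine ⟨fun n => -v n, fun n => hEneg _ (hvE n), fun m n hmn => by dsimp; exact neg_le_neg_iff.mpr (hvanti hmn), ?_⟩
      have := aux_lub_sub (w := (0 : Xδ)) hvglb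
      simpa [zero_sub] using this
    obtain ⟨d, hdE, hdanti, hdglb⟩ := key (-y) (negI y hyI) hnegu
    refine ⟨fun n => -d n, fun n => hEneg _ (hdE n), fun m n hmn => by dsimp; exact neg_le_neg_iff.mpr (hdanti hmn), ?_⟩
    have := aux_lub_sub (w := (0 : Xδ)) hdglb
    simpa [zero_sub] using this
end

section
/- Let K be an uncountable set with the discrete topology and K_∞ its one-point compactification, with C(K_∞) identified with its image in B(K) under restriction. Then u(C(K_∞)) − u(C(K_∞)) = {f ∈ B(K) : ∃ c ∈ ℝ, {x : f(x) ≠ c} at most countable}, and this space is σ-order complete. -/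
open OnePoint Filter

/-- f is the pointwise limit of an increasing sequence from E, within B(K). -/
def UpLim {K : Type*} (E : Set (K → ℝ)) (f : K → ℝ) : Prop :=
  Bdd f ∧ ∃ u : ℕ → K → ℝ, (∀ n, u n ∈ E) ∧ Monotone u ∧
    ∀ x, Tendsto (fun n => u n x) atTop (nhds (f x))

/-!
A continuous function on `K_∞` equals its value at `∞` off a countable subset of `K`. The
cocountable filter on `K` is closed under countable intersections and, `K` being uncountable,
proper; so pointwise limits of sequences of such functions, and countable suprema, are again
constant off a countable set. Conversely, if `f ≥ c` equals `c` off a countable set on which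
`φ : K → ℕ` is injective, then `f` is the increasing limit of the functions equal to `f` on
`{φ < n}` and to `c` elsewhere, each of which differs from `c` at finitely many points and so
extends continuously to `K_∞`; an arbitrary `f` is `max f c - (max f c - f)`.
-/

open Topology

namespace Filter

theorem eventually_cocountable_eq_iff {α β : Type*} {f : α → β} {c : β} :
    (∀ᶠ x in cocountable, f x = c) ↔ {x | f x ≠ c}.Countable :=
  mem_cocountable

instance cocountable_neBot {α : Type*} [Uncountable α] : (cocountable : Filter α).NeBot :=
  ⟨fun h => not_countable (Set.countable_univ_iff.1 <| by
    simpa using mem_cocountable.1 (h ▸ mem_bot : (∅ : Set α) ∈ cocountable))⟩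

instance cocountable_countableInterFilter {α : Type*} :
    CountableInterFilter (cocountable : Filter α) :=
  CardinalInterFilter.toCountableInterFilter _ Cardinal.aleph0_lt_aleph_one

theorem exists_eventually_eq_of_tendsto {α β : Type*} [TopologicalSpace β] [T2Space β]
    {l : Filter α} [CountableInterFilter l] [l.NeBot] {u : ℕ → α → β} {f : α → β}
    (hu : ∀ n, ∃ c, ∀ᶠ x in l, u n x = c)
    (hlim : ∀ x, Tendsto (fun n => u n x) atTop (𝓝 (f x))) :
    ∃ c, ∀ᶠ x in l, f x = c := by
  choose c hc using hu
  have h : ∀ᶠ x in l, ∀ n, u n x = c n := eventually_countable_forall.2 hc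
  obtain ⟨y, hy⟩ := h.exists
  refine ⟨f y, h.mono fun x hx => tendsto_nhds_unique (hlim x) ?_⟩
  simpa only [hx, ← hy] using hlim y

theorem exists_eventually_sSup_eq {α β : Type*} [ConditionallyCompleteLattice β]
    {l : Filter α} [CountableInterFilter l] {C : Set (α → β)} (hC : C.Countable)
    (h : ∀ g ∈ C, ∃ c, ∀ᶠ x in l, g x = c) :
    ∃ c, ∀ᶠ x in l, sSup C x = c := by
  choose! c hc using h
  refine ⟨⨆ g : C, c g, ((eventually_countable_ball hC).2 hc).mono fun x hx => ?_⟩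
  rw [sSup_apply]
  exact iSup_congr fun g => hx g g.2

end Filter

namespace Bdd

variable {K : Type*} {f g h : K → ℝ}

theorem sub (hf : Bdd f) (hg : Bdd g) : Bdd (f - g) := by
  obtain ⟨C, hC⟩ := hf
  obtain ⟨D, hD⟩ := hg
  exact ⟨C + D, fun x => (abs_sub _ _).trans (add_le_add (hC x) (hD x))⟩

theorem of_le_of_le (hg : Bdd g) (hh : Bdd h) (hgf : g ≤ f) (hfh : f ≤ h) : Bdd f := by
  obtain ⟨C, hC⟩ := hg
  obtain ⟨D, hD⟩ := hh
  exact ⟨max C D, fun x => (abs_le_max_abs_abs (hgf x) (hfh x)).trans (max_le_max (hC x) (hD x))⟩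

theorem max_const (hf : Bdd f) (c : ℝ) : Bdd fun x => max (f x) c := by
  obtain ⟨C, hC⟩ := hf
  exact ⟨max C |c|, fun x => abs_max_le_max_abs_abs.trans (max_le_max (hC x) le_rfl)⟩

end Bdd

section OnePoint

variable {K : Type*} [TopologicalSpace K] [DiscreteTopology K]

theorem ContinuousMap.eventually_cocountable_eq_infty {Y : Type*} [TopologicalSpace Y]
    [T1Space Y] [FirstCountableTopology Y] (g : C(OnePoint K, Y)) :
    ∀ᶠ x : K in cocountable, g x = g ∞ :=
  have h := ((continuous_iff_from_discrete g).1 g.continuous).countable_compl_preimage_ker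
  mem_cocountable.2 <| by rwa [ker_nhds] at h

theorem exists_continuousMap_eq_of_finite_ne {Y : Type*} [TopologicalSpace Y] {f : K → Y} {c : Y}
    (hf : {x | f x ≠ c}.Finite) : ∃ g : C(OnePoint K, Y), ∀ x : K, f x = g x :=
  ⟨continuousMapMkDiscrete f c <| tendsto_const_nhds.congr' <| eventually_cofinite.2 <| by
    simpa only [ne_comm] using hf, fun _ => rfl⟩

theorem UpLim.exists_eventually_cocountable_eq [Uncountable K] {f : K → ℝ}
    (hf : UpLim {f | ∃ g : C(OnePoint K, ℝ), ∀ x : K, f x = g x} f) :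
    ∃ c, ∀ᶠ x in cocountable, f x = c := by
  obtain ⟨-, u, hu, -, hlim⟩ := hf
  refine exists_eventually_eq_of_tendsto (fun n => ?_) hlim
  obtain ⟨g, hg⟩ := hu n
  exact ⟨g ∞, g.eventually_cocountable_eq_infty.mono fun x hx => (hg x).trans hx⟩

theorem upLim_of_eventually_cocountable_eq {f : K → ℝ} {c : ℝ} (hf : Bdd f) (hcf : ∀ x, c ≤ f x)
    (hfc : ∀ᶠ x in cocountable, f x = c) :
    UpLim {f | ∃ g : C(OnePoint K, ℝ), ∀ x : K, f x = g x} f := by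
  classical
  obtain ⟨φ, hφ⟩ := Set.countable_iff_exists_injOn.1 (mem_cocountable.1 hfc)
  let u : ℕ → K → ℝ := fun n x => if φ x < n then f x else c
  have hu_ne : ∀ n, {x | u n x ≠ c} ⊆ {x | f x ≠ c} ∩ φ ⁻¹' Set.Iio n := fun n x hx => by
    by_cases h : φ x < n <;> simp_all [u]
  refine ⟨hf, u, fun n => exists_continuousMap_eq_of_finite_ne (c := c) ?_,
    fun m n hmn x => ?_, fun x => ?_⟩
  · refine Set.Finite.subset (Set.Finite.of_finite_image ?_ (hφ.mono Set.inter_subset_left))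
      (hu_ne n)
    exact (Set.finite_Iio n).subset (Set.image_subset_iff.2 Set.inter_subset_right)
  · by_cases hm : φ x < m
    · simp [u, hm, hm.trans_le hmn]
    · by_cases hn : φ x < n <;> simp [u, hm, hn, hcf x]
  · refine tendsto_const_nhds.congr' (eventually_atTop.2 ⟨φ x + 1, fun n hn => ?_⟩)
    simp [u, Nat.lt_of_succ_le hn]

theorem exists_upLim_sub_upLim_eq {f : K → ℝ} {c : ℝ} (hf : Bdd f)
    (hfc : ∀ᶠ x in cocountable, f x = c) :
    ∃ a b, UpLim {f | ∃ g : C(OnePoint K, ℝ), ∀ x : K, f x = g x} a ∧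
      UpLim {f | ∃ g : C(OnePoint K, ℝ), ∀ x : K, f x = g x} b ∧ f = a - b := by
  refine ⟨fun x => max (f x) c, fun x => max (f x) c - f x, ?_, ?_, by ext; simp⟩
  · exact upLim_of_eventually_cocountable_eq (hf.max_const c) (fun x => le_max_right _ _)
      (hfc.mono fun x hx => by simp [hx])
  · exact upLim_of_eventually_cocountable_eq ((hf.max_const c).sub hf)
      (fun x => sub_nonneg.2 (le_max_left _ _)) (hfc.mono fun x hx => by simp [hx])

end OnePoint

theorem exists_isLUB_of_countable {K : Type*} {l : Filter K} [CountableInterFilter l]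
    {C : Set (K → ℝ)} (hC : C.Countable) (hne : C.Nonempty)
    (hCl : ∀ g ∈ C, Bdd g ∧ ∃ c, ∀ᶠ x in l, g x = c) {b : K → ℝ} (hb : Bdd b)
    (hCb : ∀ g ∈ C, g ≤ b) :
    ∃ s, (Bdd s ∧ ∃ c, ∀ᶠ x in l, s x = c) ∧ IsLUB C s := by
  have hlub : IsLUB C (sSup C) := isLUB_csSup hne ⟨b, hCb⟩
  obtain ⟨g, hg⟩ := hne
  exact ⟨sSup C, ⟨(hCl g hg).1.of_le_of_le hb (hlub.1 hg) (hlub.2 hCb),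
    exists_eventually_sSup_eq hC fun g hg => (hCl g hg).2⟩, hlub⟩

/-- Let K be an uncountable discrete space, K_∞ its one-point
compactification, and identify C(K_∞) with its image in B(K) under restriction. Then
u(C(K_∞)) − u(C(K_∞)) = {f ∈ B(K) : ∃ c ∈ ℝ, {x : f(x) ≠ c} at most countable}, and
this space is σ-order complete. -/
theorem stmt19 {K : Type*} [TopologicalSpace K] [DiscreteTopology K] [Uncountable K]
    (CK : Set (K → ℝ))
    (hCK : CK = {f | ∃ g : C(OnePoint K, ℝ), ∀ x : K, f x = g (↑x)})
    (S : Set (K → ℝ))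
    (hS : S = {f | ∃ a b : K → ℝ, UpLim CK a ∧ UpLim CK b ∧ f = a - b}) :
    S = {f : K → ℝ | Bdd f ∧ ∃ c : ℝ, {x : K | f x ≠ c}.Countable} ∧
    -- σ-order completeness of S
    (∀ C : Set (K → ℝ), C ⊆ S → C.Countable → C.Nonempty →
      (∃ b ∈ S, ∀ g ∈ C, g ≤ b) → ∃ s ∈ S, IsLUB C s) := by
  subst hCK
  simp only [← eventually_cocountable_eq_iff]
  have hS' : S = {f : K → ℝ | Bdd f ∧ ∃ c, ∀ᶠ x in cocountable, f x = c} := by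
    rw [hS]
    ext f
    constructor
    · rintro ⟨a, b, ha, hb, rfl⟩
      obtain ⟨ca, hca⟩ := ha.exists_eventually_cocountable_eq
      obtain ⟨cb, hcb⟩ := hb.exists_eventually_cocountable_eq
      exact ⟨ha.1.sub hb.1, ca - cb, hca.mp <| hcb.mono fun x hb ha => by simp [ha, hb]⟩
    · rintro ⟨hf, c, hfc⟩
      exact exists_upLim_sub_upLim_eq hf hfc
  subst hS'
  exact ⟨rfl, fun C hCS hC hne ⟨b, hb, hCb⟩ => exists_isLUB_of_countable hC hne hCS hb.1 hCb⟩
end
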